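/- Consider the single-user coded caching model with L levels, where level i has N_i ∈ ℕ+ files and K_i ∈ ℕ+ users, with N_i ≥ K_i for every i, and memory M ≥ 0. For every b ∈ ℕ+ and every choice of integers s_i with 0 ≤ s_i ≤ K_i for each level i, the optimal rate satisfies b·R*(M) + (Σ_{i=1}^{L} s_i)·M ≥ Σ_{i=1}^{L} min{ s_i·b , N_i } (cut-set lower bound). -/

import Mathlib

/-- A library: each level `i` has `N i` files, and each file is an arbitrary
element of `{0,1}^F`. -/
def SULibrary (L : ℕ) (N : Fin L → ℕ+) (F : ℕ) : Type :=
  (i : Fin L) → Fin (N i) → Fin F → Bool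

/-- A demand vector of the single-user setup: there are `K = K_1 + ⋯ + K_L` caches,
each with a single user attached, and each user demands a level together with a file
index of that level. -/
def SUDemand (L : ℕ) (N Kl : Fin L → ℕ+) : Type :=
  Fin (∑ i, (Kl i : ℕ)) → (i : Fin L) × Fin (N i)

/-- A demand vector is valid if, for each level `i`, exactly `K i` of the users
demand a file of level `i`. -/
def SUValidDemand (L : ℕ) (N Kl : Fin L → ℕ+) (d : SUDemand L N Kl) : Prop :=
  ∀ i : Fin L, (Finset.univ.filter fun k => (d k).1 = i).card = (Kl i : ℕ)

/-- The pair `(R, M)` is achievable in the single-user multi-level coded caching model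
with `L` levels, `N i` files and `K i` users for level `i`: `R, M ≥ 0` and, for every
`ε > 0`, there are a file size `F` and a scheme consisting of placement maps `Z k` into
a set of cardinality at most `2^(M·F)`, encoding maps `X d` into a set of cardinality
at most `2^((R+ε)·F)`, and decoding maps, such that every user correctly recovers its
demanded file for every library and every valid demand vector. -/
def SUAchievable (L : ℕ) (N Kl : Fin L → ℕ+) (R M : ℝ) : Prop :=
  0 ≤ R ∧ 0 ≤ M ∧
  ∀ ε : ℝ, 0 < ε →
    ∃ (F : ℕ+) (zsize xsize : ℕ)
      (Z : Fin (∑ i, (Kl i : ℕ)) → SULibrary L N F → Fin zsize)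
      (X : SUDemand L N Kl → SULibrary L N F → Fin xsize)
      (dec : Fin (∑ i, (Kl i : ℕ)) → SUDemand L N Kl →
        Fin xsize → Fin zsize → (Fin F → Bool)),
      (zsize : ℝ) ≤ (2 : ℝ) ^ (M * (F : ℝ)) ∧
      (xsize : ℝ) ≤ (2 : ℝ) ^ ((R + ε) * (F : ℝ)) ∧
      ∀ (w : SULibrary L N F) (d : SUDemand L N Kl), SUValidDemand L N Kl d →
        ∀ k, dec k d (X d w) (Z k w) = w (d k).1 (d k).2

/-- `R*(M)`: the optimal rate of the single-user setup,
i.e. the infimum of the rates `R` such that `(R, M)` is achievable. -/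
noncomputable def RstarSU (L : ℕ) (N Kl : Fin L → ℕ+) (M : ℝ) : ℝ :=
  sInf {R | SUAchievable L N Kl R M}

open scoped Classical in
/-- The clustering rate of the single-user setup:
`R^SU(M) = ∑_{h ∈ H'} K_h + max{(∑_{i ∈ I'} N_i)/M − 1, 0}`, where
`H' = {h : M < N_h/K_h}` and `I'` is its complement. -/
noncomputable def RSU (L : ℕ) (N Kl : Fin L → ℕ+) (M : ℝ) : ℝ :=
  ∑ h ∈ Finset.univ.filter (fun h : Fin L => M < ((N h : ℕ) : ℝ) / ((Kl h : ℕ) : ℝ)),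
      ((Kl h : ℕ) : ℝ)
  + max ((∑ i ∈ Finset.univ.filter
        (fun i : Fin L => ¬ M < ((N i : ℕ) : ℝ) / ((Kl i : ℕ) : ℝ)),
        ((N i : ℕ) : ℝ)) / M - 1) 0

/-!
Let the first `s_i` caches of every level face `b` successive valid demands in which, between
them, they ask for `min (s_i b, N_i)` distinct files of level `i`. Their cache contents together
with the `b` transmissions determine all those files, so a counting argument gives
`2 ^ (F ∑ min (s_i b, N_i)) ≤ 2 ^ (b (R + ε) F) · 2 ^ (M F ∑ s_i)`.
Dividing by `F` and letting `ε → 0` bounds every achievable rate, hence `R*(M)`.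
-/

namespace SUCutset

variable {L : ℕ} {N Kl : Fin L → ℕ+}

instance (F : ℕ) : Fintype (SULibrary L N F) := by
  unfold SULibrary; infer_instance

lemma card_library (F : ℕ) :
    Fintype.card (SULibrary L N F) = 2 ^ (F * ∑ i, (N i : ℕ)) := by
  simp [SULibrary, Fintype.card_pi, Finset.prod_pow_eq_pow_sum, ← pow_mul, Finset.mul_sum]

lemma achievable_sum_files {M : ℝ} (hM : 0 ≤ M) :
    SUAchievable L N Kl (∑ i, ((N i : ℕ) : ℝ)) M := by
  refine ⟨by positivity, hM, fun ε hε => ?_⟩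
  refine ⟨1, 1, Fintype.card (SULibrary L N 1), fun _ _ => 0,
    fun _ w => Fintype.equivFin _ w,
    fun k d x _ => (Fintype.equivFin _).symm x (d k).1 (d k).2, ?_, ?_, ?_⟩
  · simpa using Real.one_le_rpow one_le_two hM
  · rw [card_library, one_mul, PNat.one_coe, Nat.cast_one, mul_one]
    push_cast
    rw [← Real.rpow_natCast]
    push_cast
    exact Real.rpow_le_rpow_of_exponent_le one_le_two (by linarith)
  · intro w d _ k
    exact congrFun (congrFun ((Fintype.equivFin _).symm_apply_apply w) _) _

/-- In the `t`-th demand the `j`-th cache of level `i` asks for file `(j b + t) mod N_i`: as `t`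
ranges below `b`, the first `s_i` caches of level `i` together ask for the first `min (s_i b) N_i`
files of that level. -/
def cutsetFile (b t : ℕ) (σ : (i : Fin L) × Fin (Kl i)) : (i : Fin L) × Fin (N i) :=
  ⟨σ.1, ⟨(σ.2 * b + t) % N σ.1, Nat.mod_lt _ (N σ.1).pos⟩⟩

def cutsetDemand (b t : ℕ) : SUDemand L N Kl :=
  cutsetFile b t ∘ finSigmaFinEquiv.symm

lemma cutsetDemand_finSigmaFinEquiv (b t : ℕ) (σ : (i : Fin L) × Fin (Kl i)) :
    cutsetDemand (N := N) b t (finSigmaFinEquiv σ) = cutsetFile b t σ := by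
  simp [cutsetDemand]

lemma cutsetFile_div_mod (b : ℕ) (i : Fin L) (m : Fin (N i)) (hm : (m : ℕ) / b < Kl i) :
    cutsetFile b (m % b) ⟨i, ⟨m / b, hm⟩⟩ = ⟨i, m⟩ := by
  simp [cutsetFile, Nat.div_add_mod', Nat.mod_eq_of_lt m.2]

lemma cutsetDemand_valid (b t : ℕ) : SUValidDemand L N Kl (cutsetDemand b t) := by
  intro i
  rw [← Fintype.card_subtype]
  exact (Fintype.card_congr (finSigmaFinEquiv.symm.subtypeEquiv fun _ => Iff.rfl)).trans
    ((Fintype.card_congr (Equiv.sigmaSubtype i)).trans (Fintype.card_fin _))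

def cutCache {s : Fin L → ℕ} (hs : ∀ i, s i ≤ Kl i) (p : (i : Fin L) × Fin (s i)) :
    Fin (∑ i, (Kl i : ℕ)) :=
  finSigmaFinEquiv ⟨p.1, Fin.castLE (hs p.1) p.2⟩

section Scheme

variable {F zsize xsize : ℕ} (Z : Fin (∑ i, (Kl i : ℕ)) → SULibrary L N F → Fin zsize)
  (X : SUDemand L N Kl → SULibrary L N F → Fin xsize)

def cutMessages (b : ℕ) {s : Fin L → ℕ} (hs : ∀ i, s i ≤ Kl i) (w : SULibrary L N F) :
    (Fin b → Fin xsize) × ((i : Fin L) × Fin (s i) → Fin zsize) :=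
  (fun t => X (cutsetDemand b t) w, fun p => Z (cutCache hs p) w)

variable {Z X}
  {dec : Fin (∑ i, (Kl i : ℕ)) → SUDemand L N Kl → Fin xsize → Fin zsize → (Fin F → Bool)}

lemma apply_eq_of_cutMessages_eq
    (hdec : ∀ w d, SUValidDemand L N Kl d → ∀ k, dec k d (X d w) (Z k w) = w (d k).1 (d k).2)
    {b : ℕ} {s : Fin L → ℕ} (hs : ∀ i, s i ≤ Kl i) {w w' : SULibrary L N F}
    (h : cutMessages Z X b hs w = cutMessages Z X b hs w') (i : Fin L) (m : Fin (N i))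
    (hm : (m : ℕ) < s i * b) : w i m = w' i m := by
  have hb : 0 < b := Nat.pos_of_ne_zero (by rintro rfl; simp at hm)
  have hj : (m : ℕ) / b < s i := (Nat.div_lt_iff_lt_mul hb).2 hm
  set t : Fin b := ⟨m % b, Nat.mod_lt _ hb⟩
  set k := cutCache hs ⟨i, ⟨m / b, hj⟩⟩
  have hk : cutsetDemand b t k = ⟨i, m⟩ :=
    (cutsetDemand_finSigmaFinEquiv _ _ _).trans (cutsetFile_div_mod _ _ _ _)
  have decode : ∀ v, dec k (cutsetDemand b t) (X (cutsetDemand b t) v) (Z k v) = v i m := by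
    intro v
    rw [hdec v _ (cutsetDemand_valid b t) k, hk]
  have hX : X (cutsetDemand b t) w = X (cutsetDemand b t) w' := congrFun (congrArg Prod.fst h) t
  have hZ : Z k w = Z k w' := congrFun (congrArg Prod.snd h) ⟨i, ⟨m / b, hj⟩⟩
  rw [← decode w, ← decode w', hX, hZ]

lemma two_pow_le_of_decodes
    (hdec : ∀ w d, SUValidDemand L N Kl d → ∀ k, dec k d (X d w) (Z k w) = w (d k).1 (d k).2)
    (b : ℕ) {s : Fin L → ℕ} (hs : ∀ i, s i ≤ Kl i) :
    2 ^ (F * ∑ i, min (s i * b) (N i)) ≤ xsize ^ b * zsize ^ ∑ i, s i := by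
  let extend (v : (i : Fin L) → Fin (min (s i * b) (N i)) → Fin F → Bool) : SULibrary L N F :=
    fun i m => if h : (m : ℕ) < min (s i * b) (N i) then v i ⟨m, h⟩ else fun _ => false
  have hinj : Function.Injective (cutMessages Z X b hs ∘ extend) := by
    intro v v' h
    funext i m
    have hm := m.2
    rw [lt_min_iff] at hm
    simpa [extend, hm.1] using apply_eq_of_cutMessages_eq hdec hs h i ⟨m, hm.2⟩ hm.1
  calc 2 ^ (F * ∑ i, min (s i * b) (N i))
      = Fintype.card ((i : Fin L) → Fin (min (s i * b) (N i)) → Fin F → Bool) := by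
        simp [Fintype.card_pi, Finset.prod_pow_eq_pow_sum, ← pow_mul, Finset.mul_sum]
    _ ≤ Fintype.card ((Fin b → Fin xsize) × ((i : Fin L) × Fin (s i) → Fin zsize)) :=
        Fintype.card_le_of_injective _ hinj
    _ = xsize ^ b * zsize ^ ∑ i, s i := by simp [Fintype.card_sigma]

end Scheme

lemma le_of_two_pow_le_pow_mul_pow {F T b S x z : ℕ} {R M : ℝ} (hF : 0 < F)
    (hx : (x : ℝ) ≤ 2 ^ (R * F)) (hz : (z : ℝ) ≤ 2 ^ (M * F)) (h : 2 ^ (F * T) ≤ x ^ b * z ^ S) :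
    (T : ℝ) ≤ b * R + S * M := by
  have h2 : (2 : ℝ) ^ ((F : ℝ) * T) ≤ 2 ^ ((F : ℝ) * (b * R + S * M)) :=
    calc (2 : ℝ) ^ ((F : ℝ) * T) = ((2 ^ (F * T) : ℕ) : ℝ) := by
          rw [← Nat.cast_mul, Real.rpow_natCast]; norm_cast
      _ ≤ ((x ^ b * z ^ S : ℕ) : ℝ) := by exact_mod_cast h
      _ = (x : ℝ) ^ b * (z : ℝ) ^ S := by norm_cast
      _ ≤ (2 ^ (R * F)) ^ b * (2 ^ (M * F)) ^ S := by gcongr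
      _ = 2 ^ ((F : ℝ) * (b * R + S * M)) := by
          rw [← Real.rpow_natCast, ← Real.rpow_natCast, ← Real.rpow_mul zero_le_two,
            ← Real.rpow_mul zero_le_two, ← Real.rpow_add two_pos]
          ring_nf
  rw [Real.rpow_le_rpow_left_iff one_lt_two] at h2
  exact le_of_mul_le_mul_left h2 (by exact_mod_cast hF)

lemma sum_min_le_of_achievable {R M : ℝ} (hR : SUAchievable L N Kl R M) (b : ℕ)
    {s : Fin L → ℕ} (hs : ∀ i, s i ≤ Kl i) :
    ∑ i, min ((s i : ℝ) * b) (N i : ℕ) ≤ b * R + (∑ i, (s i : ℝ)) * M := by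
  refine le_of_forall_pos_le_add fun ε hε => ?_
  obtain ⟨F, zsize, xsize, Z, X, dec, hz, hx, hdec⟩ := hR.2.2 (ε / (b + 1)) (by positivity)
  have hbound := le_of_two_pow_le_pow_mul_pow F.pos hx hz (two_pow_le_of_decodes hdec b hs)
  push_cast [Nat.cast_min] at hbound
  have hslack : (b : ℝ) * (ε / (b + 1)) ≤ ε := by
    rw [mul_div_assoc', div_le_iff₀ (by positivity)]
    nlinarith
  linarith

end SUCutset

theorem su_cutset_lower_bound_general (L : ℕ) (N Kl : Fin L → ℕ+)
    (M : ℝ) (hM : 0 ≤ M)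
    (b : ℕ+) (s : Fin L → ℕ) (hs : ∀ i, s i ≤ (Kl i : ℕ)) :
    ∑ i, min ((s i : ℝ) * ((b : ℕ) : ℝ)) ((N i : ℕ) : ℝ)
      ≤ ((b : ℕ) : ℝ) * RstarSU L N Kl M + (∑ i, (s i : ℝ)) * M := by
  have hb : (0 : ℝ) < (b : ℕ) := by exact_mod_cast b.pos
  have hRstar : (∑ i, min ((s i : ℝ) * (b : ℕ)) (N i : ℕ) - (∑ i, (s i : ℝ)) * M) / (b : ℕ)
      ≤ RstarSU L N Kl M :=
    le_csInf ⟨_, SUCutset.achievable_sum_files hM⟩ fun R hR => by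
      rw [div_le_iff₀' hb]
      linarith [SUCutset.sum_min_le_of_achievable hR b hs]
  rw [div_le_iff₀' hb] at hRstar
  linarith

/-- Cut-set lower bound for the single-user setup: for every `b ∈ ℕ+` and integers
`0 ≤ s_i ≤ K_i`, the optimal rate satisfies
`b·R*(M) + (∑_i s_i)·M ≥ ∑_i min{s_i·b, N_i}`. -/
theorem su_cutset_lower_bound (L : ℕ) (N Kl : Fin L → ℕ+)
    (hNK : ∀ i, (Kl i : ℕ) ≤ (N i : ℕ)) (M : ℝ) (hM : 0 ≤ M)
    (b : ℕ+) (s : Fin L → ℕ) (hs : ∀ i, s i ≤ (Kl i : ℕ)) :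
    ∑ i, min ((s i : ℝ) * ((b : ℕ) : ℝ)) ((N i : ℕ) : ℝ)
      ≤ ((b : ℕ) : ℝ) * RstarSU L N Kl M + (∑ i, (s i : ℝ)) * M :=
  su_cutset_lower_bound_general L N Kl M hM b s hs
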